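/- Let ψ : ℝ → ℂ be a Schwartz function. Then there is a constant C > 0, depending only on ψ, such that for every sequence α : ℤ → ℂ of at most polynomial growth (i.e. there exist C₀ > 0 and d ≥ 0 with |α_n| ≤ C₀ ⟨n⟩^d for all n ∈ ℤ), every p ∈ ℤ and every τ ∈ ℝ, one has |∑_{n∈ℤ} conj(α_n) · conj(α_{-n-p}) · ψ̂(τ - n² - (n+p)²)|² ≤ C ∑_{n∈ℤ} |α_n|² |α_{-n-p}|² |ψ̂(τ - n² - (n+p)²)|. -/

import Mathlib

/-- The Japanese bracket `⟨x⟩ = (1 + x²)^{1/2}`. -/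
noncomputable def jb (x : ℝ) : ℝ := Real.sqrt (1 + x ^ 2)

/-- The time-Fourier transform `ψ̂(τ) = ∫_ℝ e^{-iτt} ψ(t) dt`. -/
noncomputable def ft (ψ : ℝ → ℂ) (τ : ℝ) : ℂ :=
  ∫ t : ℝ, Complex.exp (-Complex.I * (τ : ℂ) * (t : ℂ)) * ψ t

/-!
By Cauchy–Schwarz with the weights `w n = ‖ψ̂ (τ - n² - (n + p)²)‖`, the left-hand side is at most
`(∑ ‖α n‖² ‖α (-n - p)‖² w n) * ∑ w n`, so it suffices to bound `∑ w n` independently of `p`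
and `τ`. Now `ψ̂ x = O(⟨x⟩⁻²)`, and `n ↦ n² + (n + p)²` takes each integer value at most twice
(once on each side of `n = -p/2`), so `∑ w n` is at most twice a sum `∑ₘ ⟨τ - m⟩⁻²`, which is
bounded uniformly in `τ` by Peetre's inequality after shifting `m` by `round τ`.

Polynomial growth of `α` is what makes the right-hand series converge against the rapid decay of
`ψ̂`; without it that `tsum` could be the junk value `0`.
-/

open Real FourierTransform

lemma jb_sq (x : ℝ) : jb x ^ 2 = 1 + x ^ 2 :=
  sq_sqrt (by positivity)

lemma one_le_jb (x : ℝ) : 1 ≤ jb x :=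
  one_le_sqrt.mpr (by nlinarith)

lemma jb_pos (x : ℝ) : 0 < jb x :=
  zero_lt_one.trans_le (one_le_jb x)

lemma jb_le_jb_of_sq_le_sq {x y : ℝ} (h : x ^ 2 ≤ y ^ 2) : jb x ≤ jb y :=
  sqrt_le_sqrt (by linarith)

lemma jb_le_one_add_abs (x : ℝ) : jb x ≤ 1 + |x| :=
  sqrt_le_iff.mpr ⟨by positivity, by nlinarith [sq_abs x, abs_nonneg x]⟩

lemma jb_le_sqrt_two_mul_jb_mul_jb_sub (x y : ℝ) : jb y ≤ √2 * jb x * jb (x - y) := by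
  rw [jb, jb, jb, ← sqrt_mul zero_le_two, ← sqrt_mul (by positivity)]
  exact sqrt_le_sqrt (by nlinarith [sq_nonneg (x + (x - y)), sq_nonneg (x * (x - y))])

lemma ft_eq_fourier (f : ℝ → ℂ) (τ : ℝ) : ft f τ = 𝓕 f (τ / (2 * π)) := by
  rw [Real.fourier_real_eq_integral_exp_smul, ft]
  congr 1 with t
  rw [smul_eq_mul, show -2 * π * t * (τ / (2 * π)) = -(τ * t) by field_simp]
  push_cast
  ring_nf

lemma exists_pow_jb_mul_norm_ft_le (ψ : SchwartzMap ℝ ℂ) (k : ℕ) :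
    ∃ K, 0 < K ∧ ∀ τ, jb τ ^ k * ‖ft ψ τ‖ ≤ K := by
  obtain ⟨M, hdecay⟩ : ∃ M, ∀ x, (1 + |x|) ^ k * ‖𝓕 (ψ : ℝ → ℂ) x‖ ≤ M :=
    ⟨_, fun x => by simpa [← SchwartzMap.fourier_coe] using
      SchwartzMap.one_add_le_sup_seminorm_apply (𝕜 := ℂ) (m := (k, 0)) le_rfl le_rfl (𝓕 ψ) x⟩
  have hM : 0 ≤ M := (hdecay 0).trans' (by positivity)
  refine ⟨(2 * π) ^ k * M + 1, by positivity, fun τ => ?_⟩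
  have hscale : jb τ ≤ 2 * π * (1 + |τ / (2 * π)|) := by
    rw [abs_div, abs_of_pos (by positivity : (0:ℝ) < 2 * π), mul_add,
      mul_div_cancel₀ _ (by positivity)]
    linarith [jb_le_one_add_abs τ, two_le_pi]
  calc jb τ ^ k * ‖ft ψ τ‖
      ≤ (2 * π) ^ k * ((1 + |τ / (2 * π)|) ^ k * ‖𝓕 (ψ : ℝ → ℂ) (τ / (2 * π))‖) := by
        rw [ft_eq_fourier, ← mul_assoc, ← mul_pow]
        gcongr
        exact (jb_pos τ).le
    _ ≤ (2 * π) ^ k * M + 1 := le_add_of_le_of_nonneg (by gcongr; exact hdecay _) zero_le_one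

lemma exists_pow_jb_mul_norm_ft_sub_le (ψ : SchwartzMap ℝ ℂ) (k : ℕ) (τ : ℝ) :
    ∃ K, 0 < K ∧ ∀ y, jb y ^ k * ‖ft ψ (τ - y)‖ ≤ K := by
  obtain ⟨K, hK, hψ⟩ := exists_pow_jb_mul_norm_ft_le ψ k
  refine ⟨(√2 * jb τ) ^ k * K, by have := jb_pos τ; positivity, fun y => ?_⟩
  calc jb y ^ k * ‖ft ψ (τ - y)‖ ≤ (√2 * jb τ) ^ k * (jb (τ - y) ^ k * ‖ft ψ (τ - y)‖) := by
        rw [← mul_assoc, ← mul_pow]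
        gcongr
        exacts [(jb_pos y).le, jb_le_sqrt_two_mul_jb_mul_jb_sub τ y]
    _ ≤ (√2 * jb τ) ^ k * K := by have := jb_pos τ; gcongr; exact hψ _

lemma summable_inv_one_add_sq_int : Summable fun m : ℤ => (1 + (m : ℝ) ^ 2)⁻¹ := by
  refine .of_nonneg_of_le (fun m => by positivity) (fun m => ?_)
    (((Real.summable_one_div_int_add_rpow (1 / 2) 2).mpr one_lt_two).mul_left 2)
  have hm : (m : ℝ) + 1 / 2 ≠ 0 := by
    have : 2 * m + 1 ≠ 0 := by omega
    contrapose! this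
    exact_mod_cast (by linarith : (2 * m + 1 : ℝ) = 0)
  rw [rpow_two, sq_abs, mul_one_div, ← inv_div]
  exact inv_anti₀ (by positivity) (by nlinarith [sq_nonneg ((m : ℝ) - 1 / 2)])

lemma inv_one_add_sub_sq_le (τ : ℝ) (m : ℤ) :
    (1 + (τ - m) ^ 2)⁻¹ ≤ 5 / 2 * (1 + ((m - round τ : ℤ) : ℝ) ^ 2)⁻¹ := by
  have hr : (τ - round τ) ^ 2 ≤ 1 / 4 := by
    rw [← sq_abs]; nlinarith [abs_sub_round τ, abs_nonneg (τ - round τ)]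
  rw [← div_eq_mul_inv, le_div_iff₀ (by positivity), ← div_eq_inv_mul, div_le_iff₀ (by positivity)]
  push_cast
  -- Peetre: `1 + (m - r)² ≤ 2 (1 + (τ - r)²) (1 + (τ - m)²)`, with `(τ - r)² ≤ 1/4`, `r = round τ`.
  nlinarith [sq_nonneg ((τ - m) + (τ - round τ)), sq_nonneg ((τ - m) - (τ - round τ)),
    sq_nonneg (τ - m)]

lemma summable_inv_one_add_sub_sq (τ : ℝ) : Summable fun m : ℤ => (1 + (τ - m) ^ 2)⁻¹ :=
  .of_nonneg_of_le (fun m => by positivity) (inv_one_add_sub_sq_le τ)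
    (((summable_inv_one_add_sq_int.comp_injective (Equiv.subRight (round τ)).injective)).mul_left _)

lemma tsum_inv_one_add_sub_sq_le (τ : ℝ) :
    ∑' m : ℤ, (1 + (τ - m) ^ 2)⁻¹ ≤ 5 / 2 * ∑' m : ℤ, (1 + (m : ℝ) ^ 2)⁻¹ := by
  have hshift := summable_inv_one_add_sq_int.comp_injective (Equiv.subRight (round τ)).injective
  calc ∑' m : ℤ, (1 + (τ - m) ^ 2)⁻¹
      ≤ ∑' m : ℤ, 5 / 2 * (1 + ((m - round τ : ℤ) : ℝ) ^ 2)⁻¹ :=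
        (summable_inv_one_add_sub_sq τ).tsum_le_tsum (inv_one_add_sub_sq_le τ) (hshift.mul_left _)
    _ = 5 / 2 * ∑' m : ℤ, (1 + (m : ℝ) ^ 2)⁻¹ := by
        rw [tsum_mul_left]
        congr 1
        exact (Equiv.subRight (round τ)).tsum_eq fun m : ℤ => (1 + (m : ℝ) ^ 2)⁻¹

lemma Summable.comp_of_injOn_of_injOn_compl {α β : Type*} {f : β → ℝ} (hf : Summable f)
    {g : α → β} {s : Set α} (hs : s.InjOn g) (hsc : sᶜ.InjOn g) : Summable (f ∘ g) :=
  summable_subtype_and_compl.mp ⟨hf.comp_injective hs.injective, hf.comp_injective hsc.injective⟩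

lemma tsum_comp_le_two_mul_tsum {α β : Type*} {f : β → ℝ} (hf : Summable f) (hf0 : ∀ b, 0 ≤ f b)
    {g : α → β} {s : Set α} (hs : s.InjOn g) (hsc : sᶜ.InjOn g) :
    ∑' a, f (g a) ≤ 2 * ∑' b, f b := by
  have hfg := hf.comp_of_injOn_of_injOn_compl hs hsc
  rw [show ∑' a, f (g a) = ∑' a, (f ∘ g) a from rfl, ← hfg.tsum_subtype_add_tsum_subtype_compl s,
    two_mul]
  exact add_le_add (tsum_comp_le_tsum_of_inj hf hf0 hs.injective)
    (tsum_comp_le_tsum_of_inj hf hf0 hsc.injective)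

lemma eq_or_add_eq_zero_of_sq_add_sq_add_eq {a b p : ℤ}
    (h : a ^ 2 + (a + p) ^ 2 = b ^ 2 + (b + p) ^ 2) : a = b ∨ (2 * a + p) + (2 * b + p) = 0 := by
  have : (a - b) * ((2 * a + p) + (2 * b + p)) = 0 := by linear_combination h
  rcases mul_eq_zero.mp this with h | h
  · exact .inl (by omega)
  · exact .inr h

lemma injOn_sq_add_sq_add (p : ℤ) :
    {n : ℤ | 0 ≤ 2 * n + p}.InjOn fun n => n ^ 2 + (n + p) ^ 2 := fun a ha b hb h => by
  rcases eq_or_add_eq_zero_of_sq_add_sq_add_eq h with h | h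
  · exact h
  · simp only [Set.mem_ofPred_eq] at ha hb; omega

lemma injOn_compl_sq_add_sq_add (p : ℤ) :
    {n : ℤ | 0 ≤ 2 * n + p}ᶜ.InjOn fun n => n ^ 2 + (n + p) ^ 2 := fun a ha b hb h => by
  rcases eq_or_add_eq_zero_of_sq_add_sq_add_eq h with h | h
  · exact h
  · simp only [Set.mem_compl_iff, Set.mem_ofPred_eq] at ha hb; omega

lemma norm_tsum_sq_le_of_norm_le_mul {ι E : Type*} [SeminormedAddCommGroup E] {f : ι → E}
    {a w : ι → ℝ} (hw : ∀ i, 0 ≤ w i) (hf : ∀ i, ‖f i‖ ≤ a i * w i) (hw_sum : Summable w)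
    (haw : Summable fun i => a i ^ 2 * w i) :
    ‖∑' i, f i‖ ^ 2 ≤ (∑' i, a i ^ 2 * w i) * ∑' i, w i := by
  have ha (i) : 0 ≤ a i * w i := (norm_nonneg _).trans (hf i)
  have hr : Summable fun i => a i * w i := by
    refine .of_nonneg_of_le ha (fun i => ?_) (haw.add hw_sum)
    nlinarith [hw i, sq_nonneg (a i - 1)]
  have hf_sum : Summable fun i => ‖f i‖ := hr.of_nonneg_of_le (fun _ => norm_nonneg _) hf
  have hnorm : ‖∑' i, f i‖ ≤ ∑' i, a i * w i :=
    (norm_tsum_le_tsum_norm hf_sum).trans (hf_sum.tsum_le_tsum hf hr)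
  have hcs : (∑' i, a i * w i) ^ 2 ≤ (∑' i, a i ^ 2 * w i) * ∑' i, w i := by
    refine le_of_tendsto_of_tendsto' (hr.hasSum.pow 2)
      (Filter.Tendsto.mul haw.hasSum hw_sum.hasSum) fun s => ?_
    exact Finset.sum_sq_le_sum_mul_sum_of_sq_le_mul s
      (fun i _ => mul_nonneg (sq_nonneg _) (hw i)) (fun i _ => hw i)
      (fun i _ => (by ring : _ = _).le)
  exact (pow_le_pow_left₀ (norm_nonneg _) hnorm 2).trans hcs

lemma sq_le_sq_add_sq_sq (a b : ℤ) : a ^ 2 ≤ (a ^ 2 + b ^ 2) ^ 2 :=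
  (Int.le_self_sq _).trans (pow_le_pow_left₀ (sq_nonneg a) (le_add_of_nonneg_right (sq_nonneg b)) 2)

lemma summable_norm_sq_mul_norm_sq_mul_norm_ft (ψ : SchwartzMap ℝ ℂ) {α : ℤ → ℂ} {C₀ d : ℝ}
    (hC₀ : 0 ≤ C₀) (hd : 0 ≤ d) (hα : ∀ n : ℤ, ‖α n‖ ≤ C₀ * jb n ^ d) (p : ℤ) (τ : ℝ) :
    Summable fun n : ℤ => ‖α n‖ ^ 2 * ‖α (-n - p)‖ ^ 2 * ‖ft ψ (τ - n ^ 2 - (n + p) ^ 2)‖ := by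
  set N := ⌈d⌉₊
  -- `‖α n‖² ‖α (-n - p)‖² ≤ C₀⁴ ⟨q⟩^(4N)` for `q = n² + (n + p)²`, and two further powers of decay
  -- leave `⟨q⟩⁻² ≤ ⟨n⟩⁻²`.
  obtain ⟨K, hK, hdecay⟩ := exists_pow_jb_mul_norm_ft_sub_le ψ (4 * N + 2) τ
  refine .of_nonneg_of_le (fun n => by positivity) (fun n => ?_)
    (summable_inv_one_add_sq_int.mul_left (C₀ ^ 4 * K))
  set q : ℤ := n ^ 2 + (n + p) ^ 2
  have hα_le (m : ℤ) (hm : m ^ 2 ≤ q ^ 2) : ‖α m‖ ≤ C₀ * jb q ^ N := by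
    refine (hα m).trans (mul_le_mul_of_nonneg_left ?_ hC₀)
    calc jb m ^ d ≤ jb q ^ d :=
          rpow_le_rpow (jb_pos _).le (jb_le_jb_of_sq_le_sq (by exact_mod_cast hm)) hd
      _ ≤ jb q ^ N := by
          rw [← rpow_natCast]; exact rpow_le_rpow_of_exponent_le (one_le_jb _) (Nat.le_ceil d)
  have hn := hα_le n (sq_le_sq_add_sq_sq n (n + p))
  have hnp := hα_le (-n - p) (by linarith [sq_le_sq_add_sq_sq (n + p) n])
  have hJ := jb_pos q
  rw [show τ - n ^ 2 - (n + p) ^ 2 = τ - (q : ℝ) by push_cast [q]; ring]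
  calc ‖α n‖ ^ 2 * ‖α (-n - p)‖ ^ 2 * ‖ft ψ (τ - q)‖
      ≤ (C₀ * jb q ^ N) ^ 2 * (C₀ * jb q ^ N) ^ 2 * ‖ft ψ (τ - q)‖ := by gcongr
    _ = C₀ ^ 4 * (jb q ^ (4 * N + 2) * ‖ft ψ (τ - q)‖) / jb q ^ 2 := by field_simp; ring
    _ ≤ C₀ ^ 4 * K / jb q ^ 2 := by gcongr; exact hdecay _
    _ ≤ C₀ ^ 4 * K * (1 + (n : ℝ) ^ 2)⁻¹ := by
        rw [div_eq_mul_inv, ← jb_sq]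
        have := jb_pos n
        gcongr
        exact jb_le_jb_of_sq_le_sq (by exact_mod_cast sq_le_sq_add_sq_sq n (n + p))

lemma comp_sub_sq_add_sq_le {g : ℝ → ℝ} {K : ℝ} (hg : ∀ x, g x ≤ K * (1 + x ^ 2)⁻¹) (p n : ℤ)
    (τ : ℝ) :
    g (τ - n ^ 2 - (n + p) ^ 2) ≤ K * (1 + (τ - ((n ^ 2 + (n + p) ^ 2 : ℤ) : ℝ)) ^ 2)⁻¹ := by
  convert hg _ using 4; push_cast; ring

lemma summable_comp_sub_sq_add_sq {g : ℝ → ℝ} {K : ℝ} (hg0 : ∀ x, 0 ≤ g x)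
    (hg : ∀ x, g x ≤ K * (1 + x ^ 2)⁻¹) (p : ℤ) (τ : ℝ) :
    Summable fun n : ℤ => g (τ - n ^ 2 - (n + p) ^ 2) :=
  .of_nonneg_of_le (fun _ => hg0 _) (comp_sub_sq_add_sq_le hg p · τ)
    (((summable_inv_one_add_sub_sq τ).mul_left K).comp_of_injOn_of_injOn_compl
      (injOn_sq_add_sq_add p) (injOn_compl_sq_add_sq_add p))

lemma tsum_comp_sub_sq_add_sq_le {g : ℝ → ℝ} {K : ℝ} (hg0 : ∀ x, 0 ≤ g x)
    (hg : ∀ x, g x ≤ K * (1 + x ^ 2)⁻¹) (p : ℤ) (τ : ℝ) :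
    ∑' n : ℤ, g (τ - n ^ 2 - (n + p) ^ 2) ≤ 5 * K * ∑' m : ℤ, (1 + (m : ℝ) ^ 2)⁻¹ := by
  have hK : 0 ≤ K := by simpa using (hg0 0).trans (hg 0)
  have hF := (summable_inv_one_add_sub_sq τ).mul_left K
  calc ∑' n : ℤ, g (τ - n ^ 2 - (n + p) ^ 2)
      ≤ ∑' n : ℤ, K * (1 + (τ - ((n ^ 2 + (n + p) ^ 2 : ℤ) : ℝ)) ^ 2)⁻¹ :=
        (summable_comp_sub_sq_add_sq hg0 hg p τ).tsum_le_tsum (comp_sub_sq_add_sq_le hg p · τ)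
          (hF.comp_of_injOn_of_injOn_compl (injOn_sq_add_sq_add p) (injOn_compl_sq_add_sq_add p))
    _ ≤ 2 * ∑' m : ℤ, K * (1 + (τ - m) ^ 2)⁻¹ :=
        tsum_comp_le_two_mul_tsum hF (fun _ => by positivity) (injOn_sq_add_sq_add p)
          (injOn_compl_sq_add_sq_add p)
    _ ≤ 5 * K * ∑' m : ℤ, (1 + (m : ℝ) ^ 2)⁻¹ := by
        rw [tsum_mul_left]
        nlinarith [tsum_inv_one_add_sub_sq_le τ]

/-- pointwise bound `|ĉ_p(τ)|² ≲ ∑_n |α_n|² |α_{-n-p}|² |ψ̂(τ-n²-(n+p)²)|`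
for sequences `α` of at most polynomial growth. -/
theorem stmt5 (ψ : SchwartzMap ℝ ℂ) :
    ∃ C : ℝ, 0 < C ∧ ∀ α : ℤ → ℂ,
      (∃ (C₀ : ℝ) (d : ℝ), 0 < C₀ ∧ 0 ≤ d ∧ ∀ n : ℤ, ‖α n‖ ≤ C₀ * jb (n : ℝ) ^ d) →
      ∀ (p : ℤ) (τ : ℝ),
        ‖∑' n : ℤ, (starRingEnd ℂ) (α n) * (starRingEnd ℂ) (α (-n - p)) *
            ft (⇑ψ) (τ - (n : ℝ) ^ 2 - ((n : ℝ) + (p : ℝ)) ^ 2)‖ ^ 2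
          ≤ C * ∑' n : ℤ, ‖α n‖ ^ 2 * ‖α (-n - p)‖ ^ 2 *
              ‖ft (⇑ψ) (τ - (n : ℝ) ^ 2 - ((n : ℝ) + (p : ℝ)) ^ 2)‖ := by
  obtain ⟨K, hK, hdecay⟩ := exists_pow_jb_mul_norm_ft_le ψ 2
  have hψ (x : ℝ) : ‖ft ψ x‖ ≤ K * (1 + x ^ 2)⁻¹ := by
    rw [← jb_sq, ← div_eq_mul_inv, le_div_iff₀ (by have := jb_pos x; positivity), mul_comm]
    exact hdecay x
  have hψ0 (x : ℝ) : 0 ≤ ‖ft ψ x‖ := norm_nonneg _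
  set Z := ∑' m : ℤ, (1 + (m : ℝ) ^ 2)⁻¹
  have hZ : 0 < Z := summable_inv_one_add_sq_int.tsum_pos (fun _ => by positivity) 0 (by norm_num)
  refine ⟨5 * K * Z, by positivity, ?_⟩
  rintro α ⟨C₀, d, hC₀, hd, hα⟩ p τ
  set w : ℤ → ℝ := fun n => ‖ft ψ (τ - n ^ 2 - (n + p) ^ 2)‖
  calc _ ≤ (∑' n : ℤ, (‖α n‖ * ‖α (-n - p)‖) ^ 2 * w n) * ∑' n : ℤ, w n :=
        norm_tsum_sq_le_of_norm_le_mul (fun _ => norm_nonneg _)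
          (fun n => by simp only [norm_mul, RCLike.norm_conj, w]; rfl)
          (summable_comp_sub_sq_add_sq hψ0 hψ p τ)
          (by simpa only [mul_pow] using
            summable_norm_sq_mul_norm_sq_mul_norm_ft ψ hC₀.le hd hα p τ)
    _ ≤ (∑' n : ℤ, (‖α n‖ * ‖α (-n - p)‖) ^ 2 * w n) * (5 * K * Z) :=
        mul_le_mul_of_nonneg_left (tsum_comp_sub_sq_add_sq_le hψ0 hψ p τ)
          (tsum_nonneg fun _ => by positivity)
    _ = _ := by simp only [mul_pow, w]; ring
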